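/- An n-ary group (G,f) is derived from an ordinary group (i.e., there is a group operation · on G with f(x₁,…,xₙ)=x₁·x₂⋯xₙ) if and only if G contains an n-ary identity: an element a such that f(a^{(i-1)}, x, a^{(n-i)}) = x for all x ∈ G and all 1 ≤ i ≤ n. -/

import Mathlib

/-- `f` is an associative `n`-ary operation: inserting the inner application of `f`
at any position of a sequence of `2n-1` elements gives the same result. -/
def IsNAryAssoc {G : Type*} (n : ℕ) (f : List G → G) : Prop :=
  ∀ (s : List G) (i j : ℕ), s.length = 2 * n - 1 → i + n ≤ s.length → j + n ≤ s.length →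
    f (s.take i ++ f ((s.drop i).take n) :: s.drop (i + n)) =
      f (s.take j ++ f ((s.drop j).take n) :: s.drop (j + n))

/-- every one-variable equation `f (a₁, …, a_{i-1}, x, a_{i+1}, …, aₙ) = c`
has a unique solution `x`. -/
def NAryUniqueSolutions {G : Type*} (n : ℕ) (f : List G → G) : Prop :=
  ∀ (a : List G) (i : ℕ), a.length = n → i < n → ∀ c : G,
    ∃! x : G, f (a.take i ++ x :: a.drop (i + 1)) = c

/-- `(G, f)` is an `n`-ary (polyadic) group. -/
def IsNAryGroup {G : Type*} (n : ℕ) (f : List G → G) : Prop :=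
  IsNAryAssoc n f ∧ NAryUniqueSolutions n f

/-- `(mul, e, inv)` is a group structure on `G`. -/
def IsGroupStr {G : Type*} (mul : G → G → G) (e : G) (inv : G → G) : Prop :=
  (∀ x y z : G, mul (mul x y) z = mul x (mul y z)) ∧
  (∀ x : G, mul e x = x) ∧ (∀ x : G, mul x e = x) ∧
  (∀ x : G, mul (inv x) x = e) ∧ (∀ x : G, mul x (inv x) = e)

/-!
The identity of a group `(G, ·)` is an `n`-ary identity of the derived operation. Conversely, if
`a` is an `n`-ary identity, the binary retract `x ∘ y = f (x, a^{(n-2)}, y)` is a group with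
identity `a`: associativity of `∘` is an instance of `n`-ary associativity, left inverses are
solutions of `f (x', a^{(n-2)}, y) = a`, and `f` is the `n`-fold `∘`-product because
`f (u, y, z, a^{(m)}) = f (u, y ∘ z, a^{(m+1)})`: both sides come from
`(u, y, a^{(n-2)}, z, a, a^{(m)})` by applying `f` to a block of `n` consecutive entries.
-/

section

variable {G : Type*} {n : ℕ} {f : List G → G}

def IsNAryIdentity (n : ℕ) (f : List G → G) (a : G) : Prop :=
  ∀ (x : G) (i : ℕ), 1 ≤ i → i ≤ n →
    f (List.replicate (i - 1) a ++ x :: List.replicate (n - i) a) = x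

def retract (n : ℕ) (f : List G → G) (a x y : G) : G :=
  f (x :: (List.replicate (n - 2) a ++ [y]))

theorem IsNAryAssoc.apply_eq (hf : IsNAryAssoc n f) {u w t u' w' t' : List G}
    (hw : w.length = n) (hw' : w'.length = n) (hlen : (u ++ w ++ t).length = 2 * n - 1)
    (heq : u ++ w ++ t = u' ++ w' ++ t') :
    f (u ++ f w :: t) = f (u' ++ f w' :: t') := by
  have hle : u.length + n ≤ (u ++ w ++ t).length := by
    simp only [List.length_append, hw]; omega
  have hle' : u'.length + n ≤ (u ++ w ++ t).length := by
    rw [heq]; simp only [List.length_append, hw']; omega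
  have split : ∀ {u w t : List G}, w.length = n →
      (u ++ w ++ t).take u.length ++ f (((u ++ w ++ t).drop u.length).take n) ::
        (u ++ w ++ t).drop (u.length + n) = u ++ f w :: t := by
    intro u w t hw
    simp [List.take_left', List.drop_left', hw]
  have key := hf (u ++ w ++ t) u.length u'.length hlen hle hle'
  rwa [split hw, heq, split hw'] at key

theorem IsNAryIdentity.apply_eq {a : G} (ha : IsNAryIdentity n f a) (x : G) {k m : ℕ}
    (hkm : k + m + 1 = n) : f (List.replicate k a ++ x :: List.replicate m a) = x := by
  have hx := ha x (k + 1) (by omega) (by omega)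
  rwa [Nat.add_sub_cancel, show n - (k + 1) = m by omega] at hx

theorem List.foldr_replicate_of_left_id {mul : G → G → G} {e : G} (one_mul : ∀ x, mul e x = x)
    (k : ℕ) (c : G) : (List.replicate k e).foldr mul c = c := by
  induction k with
  | zero => rfl
  | succ k ih => simp [List.replicate_succ, ih, one_mul]

theorem isNAryIdentity_of_eq_foldr {mul : G → G → G} {e : G} (one_mul : ∀ x, mul e x = x)
    (mul_one : ∀ x, mul x e = x) (hf : ∀ l : List G, l.length = n → f l = l.foldr mul e) :
    IsNAryIdentity n f e := by
  intro x i hi hin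
  rw [hf _ (by simp; omega), List.foldr_append, List.foldr_cons,
    List.foldr_replicate_of_left_id one_mul, List.foldr_replicate_of_left_id one_mul, mul_one]

theorem isGroupStr_of_left_axioms {mul : G → G → G} {e : G} {inv : G → G}
    (assoc : ∀ x y z, mul (mul x y) z = mul x (mul y z)) (one_mul : ∀ x, mul e x = x)
    (inv_mul : ∀ x, mul (inv x) x = e) : IsGroupStr mul e inv := by
  let : Mul G := ⟨mul⟩
  let : One G := ⟨e⟩
  let : Inv G := ⟨inv⟩
  let := Group.ofLeftAxioms assoc one_mul inv_mul
  exact ⟨mul_assoc, one_mul, mul_one, inv_mul_cancel, mul_inv_cancel⟩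

section Retract

variable {a : G} (ha : IsNAryIdentity n f a) (hn : 2 ≤ n)
include ha hn

theorem retract_left_id (y : G) : retract n f a a y = y := by
  obtain ⟨k, rfl⟩ := Nat.exists_eq_add_of_le' hn
  simpa [retract, List.replicate_succ] using ha.apply_eq y (k := k + 1) (m := 0) rfl

theorem retract_right_id (x : G) : retract n f a x a = x := by
  obtain ⟨k, rfl⟩ := Nat.exists_eq_add_of_le' hn
  simpa [retract, List.replicate_succ'] using ha.apply_eq x (k := 0) (m := k + 1) (by omega)

omit ha in
theorem retract_assoc (hf : IsNAryAssoc n f) (x y z : G) :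
    retract n f a (retract n f a x y) z = retract n f a x (retract n f a y z) := by
  obtain ⟨k, rfl⟩ := Nat.exists_eq_add_of_le' hn
  simpa [retract] using hf.apply_eq (u := []) (w := x :: (List.replicate k a ++ [y]))
    (t := List.replicate k a ++ [z]) (u' := x :: List.replicate k a)
    (w' := y :: (List.replicate k a ++ [z])) (t' := []) (by simp) (by simp) (by simp; omega)
    (by simp)

omit ha in
theorem exists_retract_left_inv (hsol : NAryUniqueSolutions n f) (y : G) :
    ∃ z, retract n f a z y = a := by
  obtain ⟨k, rfl⟩ := Nat.exists_eq_add_of_le' hn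
  obtain ⟨z, hz, -⟩ := hsol (a :: (List.replicate k a ++ [y])) 0 (by simp) (by omega) a
  exact ⟨z, by simpa [retract] using hz⟩

omit hn in
theorem retract_step (hf : IsNAryAssoc n f) {u : List G} {m : ℕ} (hum : u.length + m + 2 = n)
    (y z : G) :
    f (u ++ y :: z :: List.replicate m a) =
      f (u ++ retract n f a y z :: List.replicate (m + 1) a) := by
  have key := hf.apply_eq (u := u ++ [y]) (w := List.replicate (n - 2) a ++ [z, a])
    (t := List.replicate m a) (u' := u) (w' := y :: (List.replicate (n - 2) a ++ [z]))
    (t' := List.replicate (m + 1) a) (by simp; omega) (by simp; omega) (by simp; omega)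
    (by simp [List.replicate_succ])
  have absorb : f (List.replicate (n - 2) a ++ [z, a]) = z := ha.apply_eq z (m := 1) (by omega)
  rw [absorb] at key
  simpa [retract] using key

omit hn in
theorem apply_eq_foldr_retract (hf : IsNAryAssoc n f) (v : List G) (z : G) {m : ℕ}
    (hvm : v.length + m + 1 = n) :
    f (v ++ z :: List.replicate m a) = v.foldr (retract n f a) z := by
  induction v using List.reverseRecOn generalizing z m with
  | nil => exact ha.apply_eq z (k := 0) (by simpa using hvm)
  | append_singleton u y ih =>
    simp only [List.length_append, List.length_singleton] at hvm
    calc f (u ++ [y] ++ z :: List.replicate m a)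
        = f (u ++ retract n f a y z :: List.replicate (m + 1) a) := by
          simpa using retract_step ha hf (by omega) y z
      _ = u.foldr (retract n f a) (retract n f a y z) := ih _ (by omega)
      _ = (u ++ [y]).foldr (retract n f a) z := by simp

theorem eq_foldr_retract (hf : IsNAryAssoc n f) (l : List G) (hl : l.length = n) :
    f l = l.foldr (retract n f a) a := by
  obtain rfl | ⟨v, z, rfl⟩ := l.eq_nil_or_concat'
  · simp at hl; omega
  rw [List.foldr_append, List.foldr_cons, List.foldr_nil, retract_right_id ha hn]
  exact apply_eq_foldr_retract ha hf v z (m := 0) (by simpa using hl)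

end Retract

end

theorem derived_iff_nary_identity {G : Type*} (n : ℕ) (hn : 3 ≤ n) (f : List G → G)
    (h : IsNAryGroup n f) :
    (∃ (mul : G → G → G) (e : G) (inv : G → G), IsGroupStr mul e inv ∧
        ∀ l : List G, l.length = n → f l = l.foldr mul e) ↔
      ∃ a : G, ∀ (x : G) (i : ℕ), 1 ≤ i → i ≤ n →
        f (List.replicate (i - 1) a ++ x :: List.replicate (n - i) a) = x := by
  obtain ⟨hassoc, hsol⟩ := h
  constructor
  · rintro ⟨mul, e, inv, ⟨-, one_mul, mul_one, -⟩, hf⟩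
    exact ⟨e, isNAryIdentity_of_eq_foldr one_mul mul_one hf⟩
  · rintro ⟨a, ha⟩
    have hn2 : 2 ≤ n := by omega
    choose inv inv_mul using exists_retract_left_inv hn2 hsol
    exact ⟨retract n f a, a, inv,
      isGroupStr_of_left_axioms (retract_assoc hn2 hassoc) (retract_left_id ha hn2) inv_mul,
      eq_foldr_retract ha hn2 hassoc⟩
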